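/- Suppose there exists q ∈ (0,1) such that σ₀ ≤ q/(q+1) and M r₀/μ ≤ (q(1−q)/8)·(q/(1+q) − σ₀). Then for all k ≥ 0, σ_k² ≤ σ₀² + ((1+q)/(1−q))·(M r₀/μ + M²r₀²/μ²) ≤ (q/(q+1))², and r_{k+1} ≤ q r_k. -/

import Mathlib

open Matrix MeasureTheory

noncomputable def specNorm {n : ℕ} (A : Matrix (Fin n) (Fin n) ℝ) : ℝ :=
  ‖Matrix.toEuclideanCLM (𝕜 := ℝ) A‖

noncomputable def frobNorm {n : ℕ} (A : Matrix (Fin n) (Fin n) ℝ) : ℝ :=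
  Real.sqrt (∑ i, ∑ j, (A i j) ^ 2)

noncomputable def vnorm {n : ℕ} (x : Fin n → ℝ) : ℝ :=
  Real.sqrt (∑ i, (x i) ^ 2)

noncomputable def intJac {n : ℕ} (J : (Fin n → ℝ) → Matrix (Fin n) (Fin n) ℝ)
    (x u : Fin n → ℝ) : Matrix (Fin n) (Fin n) ℝ :=
  Matrix.of fun i j => ∫ t in (0:ℝ)..(1:ℝ), J (x + t • u) i j

/-!
Write `E_k = J*⁻¹ (B_k - J*)`, so `σ_k = ‖E_k‖_F`, and `η = M ‖J*⁻¹‖ = M / μ`. Since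
`B_k (x_{k+1} - x_k) = -F x_k`, the error satisfies
`x_{k+1} - x* = E_k (x_k - x*) - J*⁻¹ (F x_k - J* (x_k - x*)) - E_k (x_{k+1} - x*)`, and the mean
value inequality gives `(1 - σ_k) r_{k+1} ≤ (σ_k + η r_k) r_k`. Broyden's update multiplies `E_k` on
the right by the orthogonal projection onto `u_kᗮ`, which does not increase the Frobenius norm, and
adds a rank-one term of norm at most `η max(r_k, r_{k+1})`: hence `σ_{k+1} ≤ σ_k + η r_k` whenever
`r_{k+1} ≤ r_k`. With `t = η r₀`, induction gives `r_k ≤ q^k r₀` and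
`σ_k² ≤ σ₀² + (1 - q^k) / (1 - q) · (t + t²)`; the smallness assumption bounds the right-hand side
by `((q - t) / (1 + q))²`, and `σ_k ≤ (q - t) / (1 + q)` is exactly what turns the first inequality
into `r_{k+1} ≤ q r_k`.
-/

open WithLp

section Norms

variable {n : ℕ}

lemma vnorm_eq_norm_toLp (v : Fin n → ℝ) : vnorm v = ‖toLp 2 v‖ := by
  simp [vnorm, EuclideanSpace.norm_eq]

lemma vnorm_nonneg (v : Fin n → ℝ) : 0 ≤ vnorm v := Real.sqrt_nonneg _

lemma vnorm_zero : vnorm (0 : Fin n → ℝ) = 0 := by simp [vnorm]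

lemma vnorm_sq (v : Fin n → ℝ) : vnorm v ^ 2 = v ⬝ᵥ v := by
  rw [vnorm, Real.sq_sqrt (by positivity), dotProduct]
  simp only [sq]

lemma vnorm_sub_le (v w : Fin n → ℝ) : vnorm (v - w) ≤ vnorm v + vnorm w := by
  simpa only [vnorm_eq_norm_toLp, toLp_sub] using norm_sub_le (toLp 2 v) (toLp 2 w)

lemma specNorm_nonneg (A : Matrix (Fin n) (Fin n) ℝ) : 0 ≤ specNorm A := norm_nonneg _

lemma vnorm_mulVec_le (A : Matrix (Fin n) (Fin n) ℝ) (v : Fin n → ℝ) :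
    vnorm (A *ᵥ v) ≤ specNorm A * vnorm v := by
  rw [vnorm_eq_norm_toLp, vnorm_eq_norm_toLp, ← toEuclideanCLM_toLp]
  exact (toEuclideanCLM (𝕜 := ℝ) A).le_opNorm _

lemma frobNorm_nonneg (A : Matrix (Fin n) (Fin n) ℝ) : 0 ≤ frobNorm A := Real.sqrt_nonneg _

lemma frobNorm_eq_sqrt_sum_vnorm_sq (A : Matrix (Fin n) (Fin n) ℝ) :
    frobNorm A = Real.sqrt (∑ i, vnorm (A i) ^ 2) := by
  simp only [frobNorm, vnorm, Real.sq_sqrt (Finset.sum_nonneg fun _ _ => sq_nonneg _)]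

lemma frobNorm_le_frobNorm_of_vnorm_row_le {A B : Matrix (Fin n) (Fin n) ℝ}
    (h : ∀ i, vnorm (A i) ≤ vnorm (B i)) :
    frobNorm A ≤ frobNorm B := by
  rw [frobNorm_eq_sqrt_sum_vnorm_sq, frobNorm_eq_sqrt_sum_vnorm_sq]
  gcongr with i
  exacts [vnorm_nonneg _, h i]

section Frobenius

attribute [local instance] Matrix.frobeniusNormedAddCommGroup Matrix.frobeniusNormedSpace

lemma frobNorm_eq_norm (A : Matrix (Fin n) (Fin n) ℝ) : frobNorm A = ‖A‖ := by
  simp [frobNorm, frobenius_norm_def, Real.sqrt_eq_rpow]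

lemma frobNorm_add_le (A B : Matrix (Fin n) (Fin n) ℝ) :
    frobNorm (A + B) ≤ frobNorm A + frobNorm B := by
  simpa only [frobNorm_eq_norm] using norm_add_le A B

lemma frobNorm_smul (c : ℝ) (A : Matrix (Fin n) (Fin n) ℝ) :
    frobNorm (c • A) = |c| * frobNorm A := by
  simp only [frobNorm_eq_norm, norm_smul, Real.norm_eq_abs]

lemma vnorm_mulVec_le_frobNorm (A : Matrix (Fin n) (Fin n) ℝ) (v : Fin n → ℝ) :
    vnorm (A *ᵥ v) ≤ frobNorm A * vnorm v := by
  simpa only [vnorm_eq_norm_toLp, frobNorm_eq_norm, ← frobenius_norm_replicateCol (ι := Unit),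
    replicateCol_mulVec] using frobenius_norm_mul A (replicateCol Unit v)

lemma frobNorm_vecMulVec_le (v w : Fin n → ℝ) :
    frobNorm (vecMulVec v w) ≤ vnorm v * vnorm w := by
  simpa only [vnorm_eq_norm_toLp, frobNorm_eq_norm, vecMulVec_eq Unit,
    frobenius_norm_replicateCol, frobenius_norm_replicateRow] using
    frobenius_norm_mul (replicateCol Unit v) (replicateRow Unit w)

end Frobenius

end Norms

lemma norm_sub_inner_div_smul_le {E : Type*} [NormedAddCommGroup E] [InnerProductSpace ℝ E]
    (u v : E) : ‖v - (inner ℝ u v / ‖u‖ ^ 2) • u‖ ≤ ‖v‖ := by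
  simpa [Submodule.starProjection_singleton] using (ℝ ∙ u)ᗮ.norm_starProjection_apply_le v

lemma vnorm_sub_dotProduct_div_smul_le {n : ℕ} (u v : Fin n → ℝ) :
    vnorm (v - ((v ⬝ᵥ u) / (u ⬝ᵥ u)) • u) ≤ vnorm v := by
  have h := norm_sub_inner_div_smul_le (toLp 2 u) (toLp 2 v)
  rwa [← vnorm_eq_norm_toLp u, vnorm_sq, EuclideanSpace.inner_toLp_toLp, ← toLp_smul, ← toLp_sub,
    ← vnorm_eq_norm_toLp, ← vnorm_eq_norm_toLp] at h

lemma frobNorm_sub_inv_dotProduct_smul_vecMulVec_le {n : ℕ} (X : Matrix (Fin n) (Fin n) ℝ)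
    (u : Fin n → ℝ) : frobNorm (X - (u ⬝ᵥ u)⁻¹ • vecMulVec (X *ᵥ u) u) ≤ frobNorm X := by
  refine frobNorm_le_frobNorm_of_vnorm_row_le fun i => ?_
  convert vnorm_sub_dotProduct_div_smul_le u (X i) using 3
  ext j
  simp [vecMulVec_apply, mulVec, div_eq_inv_mul, mul_assoc]

lemma norm_image_sub_sub_le_of_norm_fderiv_sub_le {E G : Type*} [NormedAddCommGroup E]
    [NormedSpace ℝ E] [NormedAddCommGroup G] [NormedSpace ℝ G] {f : E → G} {f' : E → E →L[ℝ] G}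
    (hf : ∀ z, HasFDerivAt f (f' z) z) (φ : E →L[ℝ] G) (c : E) {M : ℝ} (hM : 0 ≤ M)
    (hφ : ∀ z, ‖f' z - φ‖ ≤ M * ‖z - c‖) (a b : E) :
    ‖f b - f a - φ (b - a)‖ ≤ M * max ‖a - c‖ ‖b - c‖ * ‖b - a‖ := by
  have hseg : segment ℝ a b ⊆ Metric.closedBall c (max ‖a - c‖ ‖b - c‖) :=
    (convex_closedBall _ _).segment_subset (by simp [dist_eq_norm])
      (by simp [dist_eq_norm])
  refine (convex_segment a b).norm_image_sub_le_of_norm_hasFDerivWithin_le'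
    (fun z _ => (hf z).hasFDerivWithinAt) (fun z hz => ?_) (left_mem_segment ℝ a b)
    (right_mem_segment ℝ a b)
  have hz := hseg hz
  rw [Metric.mem_closedBall, dist_eq_norm] at hz
  exact (hφ z).trans (mul_le_mul_of_nonneg_left hz hM)

lemma hasFDerivAt_toLp_comp_ofLp {n : ℕ} {F : (Fin n → ℝ) → (Fin n → ℝ)}
    {A : Matrix (Fin n) (Fin n) ℝ} {z : Fin n → ℝ}
    (hF : HasFDerivAt F (LinearMap.toContinuousLinearMap A.mulVecLin) z) :
    HasFDerivAt (fun y : EuclideanSpace ℝ (Fin n) => toLp 2 (F (ofLp y)))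
      (toEuclideanCLM (𝕜 := ℝ) A) (toLp 2 z) :=
  ((EuclideanSpace.equiv (Fin n) ℝ).symm.hasFDerivAt.comp _
    (hF.comp _ (EuclideanSpace.equiv (Fin n) ℝ).hasFDerivAt)).congr_fderiv (by ext; rfl)

lemma vnorm_image_sub_sub_le {n : ℕ} {F : (Fin n → ℝ) → (Fin n → ℝ)}
    {J : (Fin n → ℝ) → Matrix (Fin n) (Fin n) ℝ}
    (hF : ∀ z, HasFDerivAt F (LinearMap.toContinuousLinearMap (J z).mulVecLin) z)
    (xs : Fin n → ℝ) {M : ℝ} (hM : 0 ≤ M)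
    (hLip : ∀ z, specNorm (J z - J xs) ≤ M * vnorm (z - xs)) (a b : Fin n → ℝ) :
    vnorm (F b - F a - J xs *ᵥ (b - a)) ≤
      M * max (vnorm (a - xs)) (vnorm (b - xs)) * vnorm (b - a) := by
  have h := norm_image_sub_sub_le_of_norm_fderiv_sub_le
    (f' := fun y => toEuclideanCLM (𝕜 := ℝ) (J (ofLp y)))
    (fun y => hasFDerivAt_toLp_comp_ofLp (hF _)) (toEuclideanCLM (𝕜 := ℝ) (J xs)) (toLp 2 xs) hM
    (fun y => by simpa [specNorm, ← map_sub, vnorm_eq_norm_toLp] using hLip (ofLp y))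
    (toLp 2 a) (toLp 2 b)
  simpa [vnorm_eq_norm_toLp, mulVec_sub] using h

-- For `u = 0` this is `B`, since `(0 : ℝ)⁻¹ = 0`.
noncomputable def broydenUpdate {n : ℕ} (B : Matrix (Fin n) (Fin n) ℝ) (u y : Fin n → ℝ) :
    Matrix (Fin n) (Fin n) ℝ :=
  B + (u ⬝ᵥ u)⁻¹ • vecMulVec (y - B *ᵥ u) u

section BroydenStep

variable {n : ℕ} (A Js B : Matrix (Fin n) (Fin n) ℝ)

lemma mul_broydenUpdate_sub (u y : Fin n → ℝ) :
    A * (broydenUpdate B u y - Js) =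
      (A * (B - Js) - (u ⬝ᵥ u)⁻¹ • vecMulVec ((A * (B - Js)) *ᵥ u) u)
        + (u ⬝ᵥ u)⁻¹ • vecMulVec (A *ᵥ (y - Js *ᵥ u)) u := by
  have hy : y - B *ᵥ u = (y - Js *ᵥ u) - (B - Js) *ᵥ u := by rw [sub_mulVec]; abel
  rw [broydenUpdate, hy, sub_vecMulVec, smul_sub, add_sub_right_comm]
  simp only [Matrix.mul_add, Matrix.mul_sub, Matrix.mul_smul, mul_vecMulVec, mulVec_mulVec]
  abel

lemma frobNorm_inv_dotProduct_smul_vecMulVec_le {u w : Fin n → ℝ} {C : ℝ} (hC : 0 ≤ C)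
    (hw : vnorm w ≤ C * vnorm u) : frobNorm ((u ⬝ᵥ u)⁻¹ • vecMulVec w u) ≤ C := by
  rw [frobNorm_smul, ← vnorm_sq, abs_of_nonneg (by positivity)]
  calc (vnorm u ^ 2)⁻¹ * frobNorm (vecMulVec w u)
      ≤ (vnorm u ^ 2)⁻¹ * (C * vnorm u ^ 2) := by
        gcongr
        calc frobNorm (vecMulVec w u) ≤ vnorm w * vnorm u := frobNorm_vecMulVec_le w u
          _ ≤ C * vnorm u ^ 2 := by rw [sq, ← mul_assoc]; gcongr; exact vnorm_nonneg u
    _ ≤ C := by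
        rw [mul_left_comm]
        exact mul_le_of_le_one_right hC (inv_mul_le_one_of_le₀ le_rfl (sq_nonneg _))

lemma frobNorm_mul_broydenUpdate_sub_le {u y : Fin n → ℝ} {C : ℝ} (hC : 0 ≤ C)
    (hy : vnorm (A *ᵥ (y - Js *ᵥ u)) ≤ C * vnorm u) :
    frobNorm (A * (broydenUpdate B u y - Js)) ≤ frobNorm (A * (B - Js)) + C := by
  rw [mul_broydenUpdate_sub]
  exact (frobNorm_add_le _ _).trans (add_le_add
    (frobNorm_sub_inv_dotProduct_smul_vecMulVec_le _ u)
    (frobNorm_inv_dotProduct_smul_vecMulVec_le hC hy))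

variable {A Js B}

lemma quasiNewton_error_eq (hB : IsUnit B.det) (hJs : IsUnit Js.det) (x xs v : Fin n → ℝ) :
    x - B⁻¹ *ᵥ v - xs = (Js⁻¹ * (B - Js)) *ᵥ (x - xs) - Js⁻¹ *ᵥ (v - Js *ᵥ (x - xs))
      - (Js⁻¹ * (B - Js)) *ᵥ (x - B⁻¹ *ᵥ v - xs) := by
  have hBv : B *ᵥ (B⁻¹ *ᵥ v) = v := by rw [mulVec_mulVec, mul_nonsing_inv _ hB, one_mulVec]
  have hJ : ∀ w, Js⁻¹ *ᵥ (Js *ᵥ w) = w := fun w => by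
    rw [mulVec_mulVec, nonsing_inv_mul _ hJs, one_mulVec]
  simp only [← mulVec_mulVec, sub_mulVec, hJ, mulVec_sub, hBv]
  abel

lemma vnorm_quasiNewton_error_le (hB : IsUnit B.det) (hJs : IsUnit Js.det) (x xs v : Fin n → ℝ)
    {C : ℝ} (hv : vnorm (Js⁻¹ *ᵥ (v - Js *ᵥ (x - xs))) ≤ C * vnorm (x - xs)) :
    (1 - frobNorm (Js⁻¹ * (B - Js))) * vnorm (x - B⁻¹ *ᵥ v - xs) ≤
      (frobNorm (Js⁻¹ * (B - Js)) + C) * vnorm (x - xs) := by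
  have he := quasiNewton_error_eq hB hJs x xs v
  set E := Js⁻¹ * (B - Js)
  set e' := x - B⁻¹ *ᵥ v - xs
  have h : vnorm e' ≤ vnorm (E *ᵥ (x - xs)) + vnorm (Js⁻¹ *ᵥ (v - Js *ᵥ (x - xs)))
      + vnorm (E *ᵥ e') := by
    conv_lhs => rw [he]
    exact (vnorm_sub_le _ _).trans (add_le_add_left (vnorm_sub_le _ _) _)
  have h₁ := vnorm_mulVec_le_frobNorm E (x - xs)
  have h₂ := vnorm_mulVec_le_frobNorm E e'
  linarith

end BroydenStep

lemma sq_add_le_sq_of_le_mul_sub {q s t : ℝ} (hq0 : 0 < q) (hq1 : q < 1) (hs : 0 ≤ s) (ht : 0 ≤ t)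
    (hst : t ≤ q * (1 - q) / 8 * (q / (1 + q) - s)) :
    s ^ 2 + (1 + q) / (1 - q) * (t + t ^ 2) ≤ ((q - t) / (1 + q)) ^ 2 := by
  have h1q : 0 < 1 - q := by linarith
  obtain ⟨D, hDs⟩ : ∃ D, D = q - s * (1 + q) := ⟨_, rfl⟩
  have hq : 0 < q * (1 - q) := mul_pos hq0 h1q
  have hst' : 8 * t * (1 + q) ≤ q * (1 - q) * D := by
    have : q / (1 + q) - s = D / (1 + q) := by rw [hDs]; field_simp
    rw [this] at hst
    rw [div_mul_div_comm, le_div_iff₀ (by positivity)] at hst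
    linarith
  have hD : 0 ≤ D := (mul_nonneg_iff_of_pos_left hq).1 (by nlinarith)
  have hDq : D ≤ q := by nlinarith
  have htD : t ≤ D / 8 := by
    nlinarith [mul_le_of_le_one_left hD (by nlinarith : q * (1 - q) ≤ 1)]
  have htq : t ≤ q / 8 := by linarith
  -- With `D = q - s (1 + q)`, the gain `(q - t)² - (s (1 + q))²` factors as `(D - t) (2q - D - t)`,
  -- and `t ≤ D / 8`, `t ≤ q / 8` make it dominate the loss `(1 + q)³ (t + t²)`.
  have hgap : 7 * D / 8 * (7 * q / 8) ≤ (D - t) * (2 * q - D - t) :=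
    mul_le_mul (by linarith) (by linarith) (by positivity) (by linarith)
  have hloss : (1 + q) ^ 3 * (t + t ^ 2) ≤ 4 * (9 / 8) * (q * (1 - q) * D / 8) := by
    rw [show (1 + q) ^ 3 * (t + t ^ 2) = (1 + q) ^ 2 * (1 + t) * ((1 + q) * t) by ring]
    gcongr
    · nlinarith
    · linarith
    · linarith
  have key : (1 + q) ^ 3 * (t + t ^ 2) ≤ (1 - q) * ((q - t) ^ 2 - (s * (1 + q)) ^ 2) := by
    rw [show (q - t) ^ 2 - (s * (1 + q)) ^ 2 = (D - t) * (2 * q - D - t) by rw [hDs]; ring]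
    nlinarith [mul_le_mul_of_nonneg_left hgap h1q.le, mul_nonneg (mul_nonneg hq0.le h1q.le) hD]
  have hdiff : ((q - t) / (1 + q)) ^ 2 - s ^ 2 =
      ((q - t) ^ 2 - (s * (1 + q)) ^ 2) / (1 + q) ^ 2 := by
    field_simp
  suffices (1 + q) / (1 - q) * (t + t ^ 2) ≤ ((q - t) / (1 + q)) ^ 2 - s ^ 2 by linarith
  rw [hdiff, div_mul_eq_mul_div, div_le_div_iff₀ h1q (by positivity)]
  linear_combination key

lemma le_mul_of_one_sub_mul_le {q t σ e r r' : ℝ} (hq0 : 0 < q) (ht : 0 ≤ t)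
    (hσ : σ ≤ (q - t) / (1 + q)) (he : e ≤ t) (hr : 0 ≤ r)
    (h : (1 - σ) * r' ≤ (σ + e) * r) : r' ≤ q * r := by
  rw [le_div_iff₀ (by linarith)] at hσ
  have hσ1 : 0 < 1 - σ := by nlinarith
  refine le_of_mul_le_mul_left ?_ hσ1
  nlinarith

lemma sq_le_sq_add_of_le_add {σ σ' e : ℝ} (hσ : σ ≤ 1 / 2) (he : 0 ≤ e)
    (hσ' : 0 ≤ σ') (h : σ' ≤ σ + e) : σ' ^ 2 ≤ σ ^ 2 + (e + e ^ 2) := by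
  nlinarith [pow_le_pow_left₀ hσ' h 2]

lemma broyden_recursion_step {q η t σ σ' r r' : ℝ} {k : ℕ} (hq0 : 0 < q) (hq1 : q < 1)
    (hη : 0 ≤ η) (ht : 0 ≤ t) (hσ' : 0 ≤ σ') (hr : 0 ≤ r) (hσ : σ ≤ (q - t) / (1 + q))
    (hηr : η * r ≤ q ^ k * t) (hcontr : (1 - σ) * r' ≤ (σ + η * r) * r)
    (hdet : r' ≤ r → σ' ≤ σ + η * r) :
    r' ≤ q * r ∧ σ' ^ 2 ≤ σ ^ 2 + q ^ k * (t + t ^ 2) := by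
  have hqk : q ^ k ≤ 1 := pow_le_one₀ hq0.le hq1.le
  have hr' := le_mul_of_one_sub_mul_le hq0 ht hσ (hηr.trans (mul_le_of_le_one_left ht hqk)) hr
    hcontr
  refine ⟨hr', ?_⟩
  have hσ2 : σ ≤ 1 / 2 := hσ.trans <| by rw [div_le_div_iff₀ (by linarith) two_pos]; linarith
  have hσσ' := sq_le_sq_add_of_le_add hσ2 (mul_nonneg hη hr) hσ'
    (hdet (hr'.trans (mul_le_of_le_one_left hr hq1.le)))
  have hqk2 : q ^ k * q ^ k ≤ q ^ k := mul_le_of_le_one_left (pow_nonneg hq0.le k) hqk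
  nlinarith [pow_le_pow_left₀ (mul_nonneg hη hr) hηr 2,
    mul_le_mul_of_nonneg_right hqk2 (sq_nonneg t)]

theorem sq_le_and_le_mul_of_broyden_recursion {q η : ℝ} {σ r : ℕ → ℝ} (hq0 : 0 < q)
    (hq1 : q < 1) (hη : 0 ≤ η) (hσ : ∀ k, 0 ≤ σ k) (hr : ∀ k, 0 ≤ r k)
    (h0 : η * r 0 ≤ q * (1 - q) / 8 * (q / (1 + q) - σ 0))
    (hcontr : ∀ k, (1 - σ k) * r (k + 1) ≤ (σ k + η * r k) * r k)
    (hdet : ∀ k, r (k + 1) ≤ r k → σ (k + 1) ≤ σ k + η * r k) :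
    (∀ k, σ k ^ 2 ≤ σ 0 ^ 2 + (1 + q) / (1 - q) * (η * r 0 + (η * r 0) ^ 2)) ∧
      σ 0 ^ 2 + (1 + q) / (1 - q) * (η * r 0 + (η * r 0) ^ 2) ≤ (q / (q + 1)) ^ 2 ∧
      ∀ k, r (k + 1) ≤ q * r k := by
  set t := η * r 0
  have ht : 0 ≤ t := mul_nonneg hη (hr 0)
  have hbound := sq_add_le_sq_of_le_mul_sub hq0 hq1 (hσ 0) ht h0
  have htq : t ≤ q := by
    have hX : q / (1 + q) - σ 0 ≤ 1 := by
      linarith [hσ 0, div_le_one_of_le₀ (by linarith : q ≤ 1 + q) (by linarith)]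
    nlinarith [mul_le_mul_of_nonneg_left hX (by nlinarith : 0 ≤ q * (1 - q) / 8)]
  have hρ : 0 ≤ (q - t) / (1 + q) := div_nonneg (by linarith) (by linarith)
  have hpart : ∀ k : ℕ, (1 - q ^ k) / (1 - q) * (t + t ^ 2) ≤ (1 + q) / (1 - q) * (t + t ^ 2) :=
    fun k => by gcongr; linarith [pow_nonneg hq0.le k]
  have hstep : ∀ k, σ k ^ 2 ≤ σ 0 ^ 2 + (1 - q ^ k) / (1 - q) * (t + t ^ 2) →
      r k ≤ q ^ k * r 0 →
      r (k + 1) ≤ q * r k ∧ σ (k + 1) ^ 2 ≤ σ k ^ 2 + q ^ k * (t + t ^ 2) := fun k hσk hrk =>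
    broyden_recursion_step hq0 hq1 hη ht (hσ _) (hr k)
      ((pow_le_pow_iff_left₀ (hσ k) hρ two_ne_zero).1 (by linarith [hpart k]))
      (by simpa only [t, mul_left_comm] using mul_le_mul_of_nonneg_left hrk hη) (hcontr k) (hdet k)
  have hinv : ∀ k, σ k ^ 2 ≤ σ 0 ^ 2 + (1 - q ^ k) / (1 - q) * (t + t ^ 2) ∧
      r k ≤ q ^ k * r 0 := by
    intro k
    induction k with
    | zero => simp
    | succ k ih =>
      obtain ⟨hrk', hσk'⟩ := hstep k ih.1 ih.2
      have hgeom : (1 - q ^ (k + 1)) / (1 - q) = (1 - q ^ k) / (1 - q) + q ^ k := by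
        field_simp [(by linarith : 1 - q ≠ 0)]
        ring
      constructor
      · rw [hgeom, add_mul]
        linarith [ih.1]
      · calc r (k + 1) ≤ q * (q ^ k * r 0) := hrk'.trans (mul_le_mul_of_nonneg_left ih.2 hq0.le)
          _ = q ^ (k + 1) * r 0 := by ring
  refine ⟨fun k => (hinv k).1.trans (by linarith [hpart k]), ?_,
    fun k => (hstep k (hinv k).1 (hinv k).2).1⟩
  refine hbound.trans (pow_le_pow_left₀ hρ ?_ 2)
  rw [add_comm 1 q]
  gcongr
  linarith

theorem stmt6_general {n : ℕ} (F : (Fin n → ℝ) → (Fin n → ℝ))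
    (J : (Fin n → ℝ) → Matrix (Fin n) (Fin n) ℝ)
    (hF : ∀ z, HasFDerivAt F (LinearMap.toContinuousLinearMap ((J z).mulVecLin)) z)
    (xs : Fin n → ℝ) (hxs : F xs = 0) (hJs : IsUnit (J xs).det)
    (μ : ℝ) (hμ : μ = 1 / specNorm ((J xs)⁻¹))
    (M : ℝ) (hM : 0 ≤ M)
    (hLip : ∀ z, specNorm (J z - J xs) ≤ M * vnorm (z - xs))
    (x : ℕ → Fin n → ℝ) (B : ℕ → Matrix (Fin n) (Fin n) ℝ)
    (hBk : ∀ k, IsUnit (B k).det)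
    (hx : ∀ k, x (k + 1) = x k - (B k)⁻¹ *ᵥ F (x k))
    (hB : ∀ k, B (k + 1) = B k + ((x (k + 1) - x k) ⬝ᵥ (x (k + 1) - x k))⁻¹ •
        vecMulVec (F (x (k + 1)) - F (x k) - B k *ᵥ (x (k + 1) - x k)) (x (k + 1) - x k))
    (q : ℝ) (hq0 : 0 < q) (hq1 : q < 1)
    (hr0 : M * vnorm (x 0 - xs) / μ ≤
      q * (1 - q) / 8 * (q / (1 + q) - frobNorm ((J xs)⁻¹ * (B 0 - J xs)))) :
    (∀ k : ℕ, frobNorm ((J xs)⁻¹ * (B k - J xs)) ^ 2 ≤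
        frobNorm ((J xs)⁻¹ * (B 0 - J xs)) ^ 2
          + (1 + q) / (1 - q) * (M * vnorm (x 0 - xs) / μ + M ^ 2 * vnorm (x 0 - xs) ^ 2 / μ ^ 2)) ∧
      (frobNorm ((J xs)⁻¹ * (B 0 - J xs)) ^ 2
          + (1 + q) / (1 - q) * (M * vnorm (x 0 - xs) / μ + M ^ 2 * vnorm (x 0 - xs) ^ 2 / μ ^ 2)
        ≤ (q / (q + 1)) ^ 2) ∧
      (∀ k : ℕ, vnorm (x (k + 1) - xs) ≤ q * vnorm (x k - xs)) := by
  have hmvt : ∀ a b, vnorm ((J xs)⁻¹ *ᵥ (F b - F a - J xs *ᵥ (b - a))) ≤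
      specNorm (J xs)⁻¹ * M * max (vnorm (a - xs)) (vnorm (b - xs)) * vnorm (b - a) := fun a b =>
    (vnorm_mulVec_le _ _).trans <| by
      simpa only [mul_assoc] using
        mul_le_mul_of_nonneg_left (vnorm_image_sub_sub_le hF xs hM hLip a b) (specNorm_nonneg _)
  set η := specNorm (J xs)⁻¹ * M
  have hη : 0 ≤ η := mul_nonneg (specNorm_nonneg _) hM
  -- Needs no positivity: if `‖J*⁻¹‖ = 0` both sides vanish, as `1 / 0 = 0` and `x / 0 = 0`.
  have hμη : ∀ r, M * r / μ = η * r := fun r => by rw [hμ, div_div_eq_mul_div, div_one]; ring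
  have hμη2 : M ^ 2 * vnorm (x 0 - xs) ^ 2 / μ ^ 2 = (η * vnorm (x 0 - xs)) ^ 2 := by
    rw [← hμη]; ring
  rw [hμη] at hr0
  rw [hμη2, hμη]
  refine sq_le_and_le_mul_of_broyden_recursion (σ := fun k => frobNorm ((J xs)⁻¹ * (B k - J xs)))
    (r := fun k => vnorm (x k - xs)) hq0 hq1 hη (fun k => frobNorm_nonneg _)
    (fun k => vnorm_nonneg _) hr0 (fun k => ?_) (fun k hk => ?_)
  · rw [hx k]
    refine vnorm_quasiNewton_error_le (hBk k) hJs _ _ _ ?_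
    simpa [hxs, vnorm_zero, max_eq_right (vnorm_nonneg _)] using hmvt xs (x k)
  · have hB' : B (k + 1) = broydenUpdate (B k) (x (k + 1) - x k) (F (x (k + 1)) - F (x k)) := hB k
    rw [hB']
    refine frobNorm_mul_broydenUpdate_sub_le _ _ _ (mul_nonneg hη (vnorm_nonneg _)) ?_
    simpa [max_eq_left hk] using hmvt (x k) (x (k + 1))

/-- Local linear convergence of Broyden's "good" scheme (Lemma: base). If for some
`q ∈ (0,1)` the initial quantities satisfy `σ₀ ≤ q/(q+1)` and
`M r₀/μ ≤ (q(1−q)/8)(q/(1+q) − σ₀)`, then for all `k`,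
`σ_k² ≤ σ₀² + ((1+q)/(1−q))(M r₀/μ + M² r₀²/μ²) ≤ (q/(q+1))²` and `r_{k+1} ≤ q r_k`. -/
theorem stmt6 {n : ℕ} (F : (Fin n → ℝ) → (Fin n → ℝ))
    (J : (Fin n → ℝ) → Matrix (Fin n) (Fin n) ℝ)
    (hF : ∀ z, HasFDerivAt F (LinearMap.toContinuousLinearMap ((J z).mulVecLin)) z)
    (hJc : Continuous J)
    (xs : Fin n → ℝ) (hxs : F xs = 0) (hJs : IsUnit (J xs).det)
    (μ : ℝ) (hμ : μ = 1 / specNorm ((J xs)⁻¹))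
    (M : ℝ) (hM : 0 ≤ M)
    (hLip : ∀ z, specNorm (J z - J xs) ≤ M * vnorm (z - xs))
    (x : ℕ → Fin n → ℝ) (B : ℕ → Matrix (Fin n) (Fin n) ℝ)
    (hBk : ∀ k, IsUnit (B k).det) (hFk : ∀ k, F (x k) ≠ 0)
    (hx : ∀ k, x (k + 1) = x k - (B k)⁻¹ *ᵥ F (x k))
    (hB : ∀ k, B (k + 1) = B k + ((x (k + 1) - x k) ⬝ᵥ (x (k + 1) - x k))⁻¹ •
        vecMulVec (F (x (k + 1)) - F (x k) - B k *ᵥ (x (k + 1) - x k)) (x (k + 1) - x k))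
    (q : ℝ) (hq0 : 0 < q) (hq1 : q < 1)
    (hσ0 : frobNorm ((J xs)⁻¹ * (B 0 - J xs)) ≤ q / (q + 1))
    (hr0 : M * vnorm (x 0 - xs) / μ ≤
      q * (1 - q) / 8 * (q / (1 + q) - frobNorm ((J xs)⁻¹ * (B 0 - J xs)))) :
    (∀ k : ℕ, frobNorm ((J xs)⁻¹ * (B k - J xs)) ^ 2 ≤
        frobNorm ((J xs)⁻¹ * (B 0 - J xs)) ^ 2
          + (1 + q) / (1 - q) * (M * vnorm (x 0 - xs) / μ + M ^ 2 * vnorm (x 0 - xs) ^ 2 / μ ^ 2)) ∧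
      (frobNorm ((J xs)⁻¹ * (B 0 - J xs)) ^ 2
          + (1 + q) / (1 - q) * (M * vnorm (x 0 - xs) / μ + M ^ 2 * vnorm (x 0 - xs) ^ 2 / μ ^ 2)
        ≤ (q / (q + 1)) ^ 2) ∧
      (∀ k : ℕ, vnorm (x (k + 1) - xs) ≤ q * vnorm (x k - xs)) :=
  stmt6_general F J hF xs hxs hJs μ hμ M hM hLip x B hBk hx hB q hq0 hq1 hr0
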